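/- Let X and Y be nonempty finite sets, let μ and ν be normalized capacities on X and Y respectively, and let f : X × Y → ℝ. Then for every π ∈ Π_Ch(μ,ν), the Choquet integral of f with respect to π_* is less than or equal to the Choquet integral of f with respect to π, where π_*(N) = max(μ(Ñ_X), ν(Ñ_Y)). In particular, the minimum of the Choquet integral of f over Π_Ch(μ,ν) is attained at π_*. -/

import Mathlib

open Finset MeasureTheory

/-- A capacity on a finite set `Z`: a monotone set function vanishing on `∅`. -/
def IsCapacity {Z : Type*} (γ : Finset Z → ℝ) : Prop :=
  γ ∅ = 0 ∧ ∀ A B : Finset Z, A ⊆ B → γ A ≤ γ B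

/-- A normalized capacity: a capacity with `γ(Z) = 1`. -/
def IsNormalizedCapacity {Z : Type*} [Fintype Z] (γ : Finset Z → ℝ) : Prop :=
  IsCapacity γ ∧ γ Finset.univ = 1

/-- Membership of a capacity `π` on `X × Y` in `Π_Ch(μ, ν)`:
`π` is a capacity whose marginals are `μ` and `ν`. -/
def InPiCh {X Y : Type*} [Fintype X] [Fintype Y]
    (μ : Finset X → ℝ) (ν : Finset Y → ℝ) (π : Finset (X × Y) → ℝ) : Prop :=
  IsCapacity π ∧ (∀ A : Finset X, π (A ×ˢ Finset.univ) = μ A) ∧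
    (∀ B : Finset Y, π (Finset.univ ×ˢ B) = ν B)

/-- Projection of `N ⊆ X × Y` onto `X`. -/
def projX {X Y : Type*} [DecidableEq X] (N : Finset (X × Y)) : Finset X :=
  N.image Prod.fst

/-- Projection of `N ⊆ X × Y` onto `Y`. -/
def projY {X Y : Type*} [DecidableEq Y] (N : Finset (X × Y)) : Finset Y :=
  N.image Prod.snd

/-- Full-fiber projection of `N ⊆ X × Y` onto `X`: points `x` with `(x, y) ∈ N` for all `y`. -/
def tprojX {X Y : Type*} [Fintype X] [Fintype Y] [DecidableEq X] [DecidableEq Y]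
    (N : Finset (X × Y)) : Finset X :=
  Finset.univ.filter (fun x => ∀ y : Y, (x, y) ∈ N)

/-- Full-fiber projection of `N ⊆ X × Y` onto `Y`: points `y` with `(x, y) ∈ N` for all `x`. -/
def tprojY {X Y : Type*} [Fintype X] [Fintype Y] [DecidableEq X] [DecidableEq Y]
    (N : Finset (X × Y)) : Finset Y :=
  Finset.univ.filter (fun y => ∀ x : X, (x, y) ∈ N)

/-- The Choquet integral of `f` with respect to a (normalized) capacity `γ` on a finite set. -/
noncomputable def choquet {Z : Type*} [Fintype Z] (γ : Finset Z → ℝ) (f : Z → ℝ) : ℝ :=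
  (∫ t in Set.Ioi (0 : ℝ), γ (Finset.univ.filter (fun z => t ≤ f z))) +
    ∫ t in Set.Iio (0 : ℝ), (γ (Finset.univ.filter (fun z => t ≤ f z)) - 1)

/-!
Every `π ∈ Π_Ch(μ, ν)` dominates `π_*` setwise: `Ñ_X × Y` and `X × Ñ_Y` are contained in `N`,
so monotonicity and the marginal conditions give `μ(Ñ_X) ≤ π(N)` and `ν(Ñ_Y) ≤ π(N)`.
The Choquet integral is monotone in the capacity, since both of its integrands are.
-/

section Capacity

variable {Z : Type*} {γ : Finset Z → ℝ}

lemma IsCapacity.nonneg (hγ : IsCapacity γ) (A : Finset Z) : 0 ≤ γ A :=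
  hγ.1 ▸ hγ.2 ∅ A (empty_subset A)

lemma IsNormalizedCapacity.nonempty [Fintype Z] (hγ : IsNormalizedCapacity γ) : Nonempty Z := by
  by_contra hZ
  rw [not_nonempty_iff] at hZ
  have h := hγ.2
  rw [univ_eq_empty, hγ.1.1] at h
  exact zero_ne_one h

lemma IsCapacity.antitone_levelSet [Fintype Z] (hγ : IsCapacity γ) (f : Z → ℝ) :
    Antitone fun t : ℝ => γ (univ.filter fun z => t ≤ f z) :=
  fun _ _ hst => hγ.2 _ _ (monotone_filter_right _ fun _ _ => hst.trans)

end Capacity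

lemma Antitone.integrableOn_Ioi_of_eq_zero {g : ℝ → ℝ} (hg : Antitone g) {M : ℝ}
    (hM : ∀ t, M < t → g t = 0) (a : ℝ) : IntegrableOn g (Set.Ioi a) := by
  have hzero : IntegrableOn g (Set.Ioi (max a M)) :=
    (integrableOn_congr_fun (fun t ht => hM t (le_max_right a M |>.trans_lt ht))
      measurableSet_Ioi).2 integrableOn_zero
  have hbounded : IntegrableOn g (Set.Ioc a (max a M)) :=
    (hg.locallyIntegrable.integrableOn_isCompact isCompact_Icc).mono_set Set.Ioc_subset_Icc_self
  rw [← Set.Ioc_union_Ioi_eq_Ioi (le_max_left a M)]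
  exact hbounded.union hzero

lemma Antitone.integrableOn_Iio_of_eq_zero {g : ℝ → ℝ} (hg : Antitone g) {m : ℝ}
    (hm : ∀ t, t < m → g t = 0) (a : ℝ) : IntegrableOn g (Set.Iio a) := by
  have hzero : IntegrableOn g (Set.Iio (min a m)) :=
    (integrableOn_congr_fun (fun t ht => hm t (ht.trans_le (min_le_right a m)))
      measurableSet_Iio).2 integrableOn_zero
  have hbounded : IntegrableOn g (Set.Ico (min a m) a) :=
    (hg.locallyIntegrable.integrableOn_isCompact isCompact_Icc).mono_set Set.Ico_subset_Icc_self
  rw [← Set.Iio_union_Ico_eq_Iio (min_le_left a m)]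
  exact hzero.union hbounded

section Choquet

variable {Z : Type*} [Fintype Z] {γ : Finset Z → ℝ}

lemma IsNormalizedCapacity.integrableOn_Ioi (hγ : IsNormalizedCapacity γ) (f : Z → ℝ) :
    IntegrableOn (fun t : ℝ => γ (univ.filter fun z => t ≤ f z)) (Set.Ioi 0) := by
  obtain ⟨M, hM⟩ := Finite.bddAbove_range f
  refine (hγ.1.antitone_levelSet f).integrableOn_Ioi_of_eq_zero (M := M) (fun t ht => ?_) 0
  rw [filter_false_of_mem fun z _ hz => (hM ⟨z, rfl⟩).not_gt (ht.trans_le hz), hγ.1.1]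

lemma IsNormalizedCapacity.integrableOn_Iio (hγ : IsNormalizedCapacity γ) (f : Z → ℝ) :
    IntegrableOn (fun t : ℝ => γ (univ.filter fun z => t ≤ f z) - 1) (Set.Iio 0) := by
  obtain ⟨m, hm⟩ := Finite.bddBelow_range f
  have hanti : Antitone fun t : ℝ => γ (univ.filter fun z => t ≤ f z) - 1 :=
    fun _ _ hst => sub_le_sub_right (hγ.1.antitone_levelSet f hst) 1
  refine hanti.integrableOn_Iio_of_eq_zero (m := m) (fun t ht => ?_) 0
  rw [filter_true_of_mem fun z _ => ht.le.trans (hm ⟨z, rfl⟩), hγ.2, sub_self]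

lemma choquet_mono {γ₁ γ₂ : Finset Z → ℝ} (h₁ : IsNormalizedCapacity γ₁)
    (h₂ : IsNormalizedCapacity γ₂) (hle : ∀ N, γ₁ N ≤ γ₂ N) (f : Z → ℝ) :
    choquet γ₁ f ≤ choquet γ₂ f :=
  add_le_add
    (setIntegral_mono_on (h₁.integrableOn_Ioi f) (h₂.integrableOn_Ioi f) measurableSet_Ioi
      fun _ _ => hle _)
    (setIntegral_mono_on (h₁.integrableOn_Iio f) (h₂.integrableOn_Iio f) measurableSet_Iio
      fun _ _ => sub_le_sub_right (hle _) 1)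

end Choquet

section Product

variable {X Y : Type*} [Fintype X] [Fintype Y]

lemma InPiCh.isNormalizedCapacity {μ : Finset X → ℝ} {ν : Finset Y → ℝ} {π : Finset (X × Y) → ℝ}
    (hμ : IsNormalizedCapacity μ) (hπ : InPiCh μ ν π) : IsNormalizedCapacity π :=
  ⟨hπ.1, by rw [← univ_product_univ, hπ.2.1, hμ.2]⟩

variable [DecidableEq X] [DecidableEq Y]

lemma tprojX_product_subset (N : Finset (X × Y)) : tprojX N ×ˢ univ ⊆ N :=
  fun p hp => (mem_filter.1 (mem_product.1 hp).1).2 p.2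

lemma tprojY_product_subset (N : Finset (X × Y)) : univ ×ˢ tprojY N ⊆ N :=
  fun p hp => (mem_filter.1 (mem_product.1 hp).2).2 p.1

lemma tprojX_mono : Monotone (tprojX : Finset (X × Y) → Finset X) :=
  fun _ _ hNM => monotone_filter_right _ fun _ _ hx y => hNM (hx y)

lemma tprojY_mono : Monotone (tprojY : Finset (X × Y) → Finset Y) :=
  fun _ _ hNM => monotone_filter_right _ fun _ _ hy x => hNM (hy x)

lemma tprojX_product_univ [Nonempty Y] (A : Finset X) : tprojX (A ×ˢ (univ : Finset Y)) = A := by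
  ext x
  simp [tprojX]

lemma tprojY_univ_product [Nonempty X] (B : Finset Y) : tprojY ((univ : Finset X) ×ˢ B) = B := by
  ext y
  simp [tprojY]

lemma tprojX_empty [Nonempty Y] : tprojX (∅ : Finset (X × Y)) = ∅ := by
  ext x
  simp [tprojX]

lemma tprojY_empty [Nonempty X] : tprojY (∅ : Finset (X × Y)) = ∅ := by
  ext y
  simp [tprojY]

lemma tprojY_product_univ_of_ne_univ {A : Finset X} (hA : A ≠ univ) :
    tprojY (A ×ˢ (univ : Finset Y)) = ∅ := by
  obtain ⟨x, hx⟩ := not_forall.1 (mt eq_univ_iff_forall.2 hA)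
  exact filter_false_of_mem fun y _ hy => hx (mem_product.1 (hy x)).1

lemma tprojX_univ_product_of_ne_univ {B : Finset Y} (hB : B ≠ univ) :
    tprojX ((univ : Finset X) ×ˢ B) = ∅ := by
  obtain ⟨y, hy⟩ := not_forall.1 (mt eq_univ_iff_forall.2 hB)
  exact filter_false_of_mem fun x _ hx => hy (mem_product.1 (hx y)).2

/-- The capacity `π_*` on `X × Y`. -/
def piLower (μ : Finset X → ℝ) (ν : Finset Y → ℝ) (N : Finset (X × Y)) : ℝ :=
  max (μ (tprojX N)) (ν (tprojY N))

variable {μ : Finset X → ℝ} {ν : Finset Y → ℝ}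

lemma piLower_le {π : Finset (X × Y) → ℝ} (hπ : InPiCh μ ν π) (N : Finset (X × Y)) :
    piLower μ ν N ≤ π N :=
  max_le (hπ.2.1 (tprojX N) ▸ hπ.1.2 _ _ (tprojX_product_subset N))
    (hπ.2.2 (tprojY N) ▸ hπ.1.2 _ _ (tprojY_product_subset N))

lemma piLower_mem_piCh (hμ : IsNormalizedCapacity μ) (hν : IsNormalizedCapacity ν) :
    InPiCh μ ν (piLower μ ν) := by
  have := hμ.nonempty
  have := hν.nonempty
  refine ⟨⟨?_, fun N M hNM => max_le_max (hμ.1.2 _ _ (tprojX_mono hNM))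
    (hν.1.2 _ _ (tprojY_mono hNM))⟩, fun A => ?_, fun B => ?_⟩
  · rw [piLower, tprojX_empty, tprojY_empty, hμ.1.1, hν.1.1, max_self]
  · rw [piLower, tprojX_product_univ]
    by_cases hA : A = univ
    · rw [hA, tprojY_univ_product, hμ.2, hν.2, max_self]
    · rw [tprojY_product_univ_of_ne_univ hA, hν.1.1]
      exact max_eq_left (hμ.1.nonneg A)
  · rw [piLower, tprojY_univ_product]
    by_cases hB : B = univ
    · rw [hB, tprojX_product_univ, hμ.2, hν.2, max_self]
    · rw [tprojX_univ_product_of_ne_univ hB, hμ.1.1]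
      exact max_eq_right (hν.1.nonneg B)

end Product

theorem choquet_min_at_piLower_general {X Y : Type*} [Fintype X] [Fintype Y]
    [DecidableEq X] [DecidableEq Y]
    (μ : Finset X → ℝ) (ν : Finset Y → ℝ)
    (hμ : IsNormalizedCapacity μ) (hν : IsNormalizedCapacity ν) (f : X × Y → ℝ) :
    InPiCh μ ν (fun N : Finset (X × Y) => max (μ (tprojX N)) (ν (tprojY N))) ∧
      ∀ π : Finset (X × Y) → ℝ, InPiCh μ ν π →
        choquet (fun N : Finset (X × Y) => max (μ (tprojX N)) (ν (tprojY N))) f ≤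
          choquet π f := by
  have hlower := piLower_mem_piCh hμ hν
  exact ⟨hlower, fun π hπ => choquet_mono (hlower.isNormalizedCapacity hμ)
    (hπ.isNormalizedCapacity hμ) (piLower_le hπ) f⟩

/-- the Choquet integral of `f` with respect to `π_*` is a lower bound for the
Choquet integral of `f` with respect to any `π ∈ Π_Ch(μ, ν)`; since `π_* ∈ Π_Ch(μ, ν)`,
the minimum of the Choquet integral over `Π_Ch(μ, ν)` is attained at `π_*`. -/
theorem choquet_min_at_piLower {X Y : Type*} [Fintype X] [Fintype Y] [Nonempty X] [Nonempty Y]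
    [DecidableEq X] [DecidableEq Y]
    (μ : Finset X → ℝ) (ν : Finset Y → ℝ)
    (hμ : IsNormalizedCapacity μ) (hν : IsNormalizedCapacity ν) (f : X × Y → ℝ) :
    InPiCh μ ν (fun N : Finset (X × Y) => max (μ (tprojX N)) (ν (tprojY N))) ∧
      ∀ π : Finset (X × Y) → ℝ, InPiCh μ ν π →
        choquet (fun N : Finset (X × Y) => max (μ (tprojX N)) (ν (tprojY N))) f ≤
          choquet π f :=
  choquet_min_at_piLower_general μ ν hμ hν f
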